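/- The theories T₁ = {∃=1 x (x=x)} in a signature with countably many unary predicates p_i, and T₂ = {∃=1 y (y=y)} ∪ {∀y(q₀(y) → q_i(y)) : i ∈ ℕ} in a signature with countably many unary predicates q_i, have equivalent categories of models: both Mod(T₁) and Mod(T₂) are discrete categories with exactly 2^{ℵ₀} isomorphism classes of objects, so any bijection between isomorphism classes induces an equivalence of categories. -/

import Mathlib

/-!
A model of either theory has exactly one element, so it is determined up to isomorphism by the
set of predicates true of that element, and every elementary embedding between two models is the
unique map between them; it exists exactly when the two predicate sets agree. Hence `Mod(T)` is
equivalent to the discrete category on the set of realised predicate sets. For `T₁` these are all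
subsets of `ℕ`, for `T₂` those `S` with `0 ∈ S → S = ℕ`; both families have size `2^ℵ₀`, so the
two discrete categories are equivalent.
-/

open FirstOrder FirstOrder.Language CategoryTheory

universe u v w

namespace MoritaPaper

/-- The category `Mod(T)` of models of a first-order theory `T`, with elementary
embeddings as morphisms. -/
instance modelCat {L : FirstOrder.Language.{u, v}} (T : L.Theory) :
    Category (Theory.ModelType.{u, v, w} T) where
  Hom M N := M ↪ₑ[L] N
  id M := ElementaryEmbedding.refl L M
  comp f g := g.comp f
  id_comp _ := ElementaryEmbedding.ext fun _ => rfl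
  comp_id _ := ElementaryEmbedding.ext fun _ => rfl
  assoc _ _ _ := ElementaryEmbedding.ext fun _ => rfl

/-- The setoid identifying isomorphic models of `T`. -/
def isoSetoid {L : FirstOrder.Language.{u, v}} (T : L.Theory) :
    Setoid (Theory.ModelType.{u, v, w} T) where
  r M N := Nonempty ((M : Type w) ≃[L] (N : Type w))
  iseqv := ⟨fun M => ⟨FirstOrder.Language.Equiv.refl L (M : Type w)⟩, fun ⟨e⟩ => ⟨e.symm⟩, fun ⟨e⟩ ⟨f⟩ => ⟨f.comp e⟩⟩

/-- A single-sorted signature with no function symbols and countably many unary predicate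
symbols `p₀, p₁, p₂, …`. -/
def countUnaryLang : FirstOrder.Language :=
  ⟨fun _ => Empty, fun n => match n with | 1 => ℕ | _ => Empty⟩

/-- The `i`-th unary predicate symbol. -/
def pS (i : ℕ) : countUnaryLang.Relations 1 := i

/-- The sentence `∃=1 x (x = x)`, i.e. `∃x ((x = x) ∧ ∀z ((z = z) → x = z))`. -/
def uniqueSent (L : FirstOrder.Language.{u, v}) : L.Sentence :=
  ∃' ((&0 =' &0) ⊓ ∀' ((&1 =' &1) ⟹ (&0 =' &1)))

/-- The theory `T₁ = {∃=1 x (x = x)}`. -/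
def T₁ : countUnaryLang.Theory := {uniqueSent countUnaryLang}

/-- The theory `T₂ = {∃=1 y (y = y)} ∪ {∀y (q₀(y) → q_i(y)) : i ∈ ℕ}`. -/
def T₂ : countUnaryLang.Theory :=
  {uniqueSent countUnaryLang} ∪
    Set.range fun i : ℕ => ∀' ((pS 0).boundedFormula₁ &0 ⟹ (pS i).boundedFormula₁ &0)

section Thin

variable {C : Type*} [Category C] [Quiver.IsThin C] {α : Type*}

noncomputable def equivalenceDiscreteRange (f : C → α)
    (hf : ∀ X Y : C, Nonempty (X ⟶ Y) ↔ f X = f Y) : C ≌ Discrete (Set.range f) :=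
  CategoryTheory.Equivalence.mk
    { obj X := ⟨⟨f X, X, rfl⟩⟩
      map g := Discrete.eqToHom (Subtype.ext ((hf _ _).1 ⟨g⟩)) }
    (Discrete.functor fun a => a.2.choose)
    (NatIso.ofComponents fun X =>
      have h : f X = f (Set.mem_range_self X).choose := (Set.mem_range_self X).choose_spec.symm
      iso_of_both_ways ((hf _ _).2 h).some ((hf _ _).2 h.symm).some)
    (Discrete.natIso fun a => eqToIso (congrArg Discrete.mk (Subtype.ext a.as.2.choose_spec)))

end Thin

section OneElementModels

variable {L : FirstOrder.Language.{u, v}}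

theorem realize_uniqueSent_iff {M : Type w} [L.Structure M] :
    M ⊨ uniqueSent L ↔ Nonempty M ∧ Subsingleton M := by
  simp [uniqueSent, Sentence.Realize, Formula.Realize, Fin.snoc]
  exact ⟨fun ⟨a, ha⟩ => ⟨⟨a⟩, ⟨fun x y => (ha x).symm.trans (ha y)⟩⟩,
    fun ⟨⟨a⟩, _⟩ => ⟨a, fun _ => Subsingleton.elim _ _⟩⟩

variable {T : L.Theory} (hT : uniqueSent L ∈ T)
include hT

theorem subsingleton_of_uniqueSent_mem (M : Theory.ModelType.{u, v, w} T) : Subsingleton M :=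
  (realize_uniqueSent_iff.1 (M.is_model.realize_of_mem _ hT)).2

theorem isThin_modelType_of_uniqueSent_mem : Quiver.IsThin (Theory.ModelType.{u, v, w} T) :=
  fun _ N =>
    have := subsingleton_of_uniqueSent_mem hT N
    ⟨fun _ _ => ElementaryEmbedding.ext fun _ => Subsingleton.elim _ _⟩

end OneElementModels

section PredicateSets

variable {M : Type w} {N : Type*} [countUnaryLang.Structure M] [countUnaryLang.Structure N]

def predSet (M : Type w) [countUnaryLang.Structure M] : Set ℕ :=
  {i | M ⊨ ∀' (pS i).boundedFormula₁ (&0 : countUnaryLang.Term (Empty ⊕ Fin 1))}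

theorem mem_predSet {i : ℕ} : i ∈ predSet M ↔ ∀ x : M, Structure.RelMap (pS i) ![x] := by
  simp [predSet, Sentence.Realize, Formula.Realize, Fin.snoc]

theorem relMap_iff_mem_predSet [Subsingleton M] (i : ℕ) (x : Fin 1 → M) :
    Structure.RelMap (pS i) x ↔ i ∈ predSet M := by
  have h (y : M) : ![y] = x := funext fun _ => Subsingleton.elim _ _
  rw [mem_predSet]
  exact ⟨fun hx y => h y ▸ hx, fun hall => h (x 0) ▸ hall (x 0)⟩

theorem predSet_eq_of_elementaryEmbedding (f : M ↪ₑ[countUnaryLang] N) :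
    predSet M = predSet N :=
  Set.ext fun _ => f.map_sentence _

theorem predSet_eq_of_equiv (e : M ≃[countUnaryLang] N) : predSet M = predSet N :=
  Set.ext fun _ => StrongHomClass.realize_sentence e _

noncomputable def equivOfPredSetEq [Nonempty M] [Nonempty N] [Subsingleton M] [Subsingleton N]
    (h : predSet M = predSet N) : M ≃[countUnaryLang] N where
  toEquiv := equivOfSubsingletonOfSubsingleton (fun _ => Classical.arbitrary N)
    (fun _ => Classical.arbitrary M)
  map_fun' f := Empty.elim f
  map_rel' {n} r x := match n, r with
    | 1, i => (relMap_iff_mem_predSet i _).trans (h ▸ (relMap_iff_mem_predSet i x).symm)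

abbrev unitStructure (S : Set ℕ) : countUnaryLang.Structure PUnit.{w + 1} where
  funMap f := Empty.elim f
  RelMap {n} r _ := match n, r with | 1, i => i ∈ S

theorem predSet_unitStructure (S : Set ℕ) : @predSet PUnit.{w + 1} (unitStructure S) = S := by
  let := unitStructure.{w} S
  ext i
  exact mem_predSet.trans ⟨fun h => h PUnit.unit, fun h _ => h⟩

end PredicateSets

def realizedPredSets (T : countUnaryLang.Theory) : Set (Set ℕ) :=
  Set.range fun M : Theory.ModelType.{0, 0, w} T => predSet M

section ModelsOfUniqueSent

variable {T : countUnaryLang.Theory} (hT : uniqueSent countUnaryLang ∈ T)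
include hT

theorem nonempty_hom_iff (M N : Theory.ModelType.{0, 0, w} T) :
    Nonempty (M ⟶ N) ↔ predSet M = predSet N := by
  have := subsingleton_of_uniqueSent_mem hT M
  have := subsingleton_of_uniqueSent_mem hT N
  exact ⟨fun ⟨f⟩ => predSet_eq_of_elementaryEmbedding f,
    fun h => ⟨(equivOfPredSetEq h).toElementaryEmbedding⟩⟩

theorem isoSetoid_rel_iff (M N : Theory.ModelType.{0, 0, w} T) :
    isoSetoid T M N ↔ predSet M = predSet N := by
  have := subsingleton_of_uniqueSent_mem hT M
  have := subsingleton_of_uniqueSent_mem hT N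
  exact ⟨fun ⟨e⟩ => predSet_eq_of_equiv e, fun h => ⟨equivOfPredSetEq h⟩⟩

theorem mem_realizedPredSets_iff (S : Set ℕ) :
    S ∈ realizedPredSets.{w} T ↔
      @Theory.Model _ PUnit.{w + 1} (unitStructure S) T := by
  let := unitStructure.{w} S
  constructor
  · rintro ⟨M, rfl⟩
    have := subsingleton_of_uniqueSent_mem hT M
    exact StrongHomClass.theory_model (equivOfPredSetEq (predSet_unitStructure (predSet M)).symm)
  · intro h
    exact ⟨Theory.ModelType.of T PUnit, predSet_unitStructure S⟩

noncomputable def modelTypeEquivalenceDiscrete :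
    Theory.ModelType.{0, 0, w} T ≌ Discrete (realizedPredSets.{w} T) :=
  have := isThin_modelType_of_uniqueSent_mem hT
  equivalenceDiscreteRange _ (nonempty_hom_iff hT)

noncomputable def quotientIsoSetoidEquivRange :
    Quotient (isoSetoid.{0, 0, w} T) ≃ realizedPredSets.{w} T :=
  (Quotient.congrRight (isoSetoid_rel_iff hT)).trans (Setoid.quotientKerEquivRange _)

theorem exists_modelType_equivalence_discrete :
    ∃ ι : Type*, Nonempty (Theory.ModelType.{0, 0, w} T ≌ Discrete ι) :=
  ⟨_, ⟨(modelTypeEquivalenceDiscrete hT).trans (Discrete.equivalence Equiv.ulift.symm)⟩⟩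

theorem mk_quotient_isoSetoid :
    Cardinal.mk (Quotient (isoSetoid.{0, 0, w} T)) =
      Cardinal.lift.{w + 1} (Cardinal.mk (realizedPredSets.{w} T)) := by
  simpa using Cardinal.mk_congr_lift (quotientIsoSetoidEquivRange hT)

end ModelsOfUniqueSent

theorem uniqueSent_mem_T₁ : uniqueSent countUnaryLang ∈ T₁ := rfl

theorem uniqueSent_mem_T₂ : uniqueSent countUnaryLang ∈ T₂ := Or.inl rfl

theorem realizedPredSets_T₁ : realizedPredSets.{w} T₁ = Set.univ := by
  refine Set.eq_univ_of_forall fun S => (mem_realizedPredSets_iff uniqueSent_mem_T₁ S).2 ?_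
  let := unitStructure.{w} S
  rw [T₁, Theory.model_singleton_iff, realize_uniqueSent_iff]
  exact ⟨inferInstance, inferInstance⟩

theorem realizedPredSets_T₂ : realizedPredSets.{w} T₂ = {S | 0 ∈ S → S = Set.univ} := by
  ext S
  rw [mem_realizedPredSets_iff uniqueSent_mem_T₂ S]
  let := unitStructure.{w} S
  rw [T₂, Theory.model_union_iff, Theory.model_singleton_iff, realize_uniqueSent_iff]
  simp only [Sentence.Realize, Formula.Realize, Theory.model_iff, Set.forall_mem_range,
    BoundedFormula.realize_all, BoundedFormula.realize_imp, BoundedFormula.realize_rel₁]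
  change (_ ∧ ∀ (i : ℕ) (_ : PUnit), 0 ∈ S → i ∈ S) ↔ (0 ∈ S → S = Set.univ)
  rw [Set.eq_univ_iff_forall]
  exact ⟨fun h h0 i => h.2 i PUnit.unit h0,
    fun h => ⟨⟨inferInstance, inferInstance⟩, fun i _ h0 => h h0 i⟩⟩

theorem mk_setOf_zero_mem_imp_eq_univ :
    Cardinal.mk {S : Set ℕ | 0 ∈ S → S = Set.univ} = 2 ^ Cardinal.aleph0 := by
  have zero_notMem_image_succ (S : Set ℕ) : 0 ∉ Nat.succ '' S := fun ⟨n, _, hn⟩ =>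
    n.succ_ne_zero hn
  rw [← Cardinal.mk_nat, ← Cardinal.mk_set]
  refine le_antisymm (Cardinal.mk_set_le _) (Cardinal.mk_le_of_injective
    (f := fun S => ⟨Nat.succ '' S, fun h => (zero_notMem_image_succ S h).elim⟩) fun S T h => ?_)
  exact Set.image_injective.2 Nat.succ_injective (congrArg Subtype.val h)

theorem mk_realizedPredSets_T₁ :
    Cardinal.mk (realizedPredSets.{w} T₁) = 2 ^ Cardinal.aleph0 := by
  rw [realizedPredSets_T₁, Cardinal.mk_univ, Cardinal.mk_set, Cardinal.mk_nat]

theorem mk_realizedPredSets_T₂ :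
    Cardinal.mk (realizedPredSets.{w} T₂) = 2 ^ Cardinal.aleph0 := by
  rw [realizedPredSets_T₂, mk_setOf_zero_mem_imp_eq_univ]

/-- The theories `T₁ = {∃=1 x (x = x)}` and
`T₂ = {∃=1 y (y = y)} ∪ {∀y (q₀(y) → q_i(y)) : i ∈ ℕ}` have equivalent categories of
models: both `Mod(T₁)` and `Mod(T₂)` are discrete categories with exactly `2^ℵ₀`
isomorphism classes of objects, and `Mod(T₁) ≌ Mod(T₂)`. -/
theorem T₁_T₂_categoricallyEquivalent :
    (∃ ι : Type*, Nonempty (Theory.ModelType.{0, 0, 0} T₁ ≌ Discrete ι)) ∧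
    (∃ ι : Type*, Nonempty (Theory.ModelType.{0, 0, 0} T₂ ≌ Discrete ι)) ∧
    Cardinal.mk (Quotient (isoSetoid.{0, 0, 0} T₁)) = 2 ^ Cardinal.aleph0 ∧
    Cardinal.mk (Quotient (isoSetoid.{0, 0, 0} T₂)) = 2 ^ Cardinal.aleph0 ∧
    Nonempty (Theory.ModelType.{0, 0, 0} T₁ ≌ Theory.ModelType.{0, 0, 0} T₂) := by
  obtain ⟨e⟩ := Cardinal.eq.1 (mk_realizedPredSets_T₁.{0}.trans mk_realizedPredSets_T₂.symm)
  refine ⟨exists_modelType_equivalence_discrete uniqueSent_mem_T₁,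
    exists_modelType_equivalence_discrete uniqueSent_mem_T₂, ?_, ?_,
    ⟨((modelTypeEquivalenceDiscrete uniqueSent_mem_T₁).trans (Discrete.equivalence e)).trans
      (modelTypeEquivalenceDiscrete uniqueSent_mem_T₂).symm⟩⟩
  · rw [mk_quotient_isoSetoid uniqueSent_mem_T₁, mk_realizedPredSets_T₁,
      Cardinal.lift_two_power, Cardinal.lift_aleph0]
  · rw [mk_quotient_isoSetoid uniqueSent_mem_T₂, mk_realizedPredSets_T₂,
      Cardinal.lift_two_power, Cardinal.lift_aleph0]

end MoritaPaper
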